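/- Let q be a real quaternion which is not a real scalar (i.e., q is not in the image of the algebra map ℝ → ℍ), and let A(q) denote the ℝ-linear span of {1, q} in ℍ. Then for every ℝ-subspace X of ℍ of dimension 2, the following are equivalent: (i) q·x ∈ X for every x ∈ X (X is invariant under left multiplication by q); (ii) there exists a nonzero quaternion t such that X = A(q)·t, the image of A(q) under right multiplication by t. -/

import Mathlib

/-!
If `X` is invariant under left multiplication by `q` and `t ∈ X` is nonzero, then `X` contains
`span {1, q} * t = span {t, q t}`, which is two-dimensional because right multiplication by `t`
is injective and `1, q` are independent; so it is all of `X`. Conversely `span {1, q}` is stable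
under left multiplication by `q`, since `q` satisfies its quadratic equation
`q² = 2 Re q · q - |q|²`, and left multiplications commute with right ones.
-/

open Module Submodule

section LeftMulInvariant

variable {K A : Type*} [Field K] [DivisionRing A] [Algebra K A]

theorem finrank_span_one_pair {q : A} (hq : q ∉ Set.range (algebraMap K A)) :
    finrank K (span K ({1, q} : Set A)) = 2 := by
  have hli : LinearIndependent K ![(1 : A), q] :=
    (LinearIndependent.pair_iff' one_ne_zero).mpr fun a ha ↦
      hq ⟨a, by rw [Algebra.algebraMap_eq_smul_one, ha]⟩
  rw [← Matrix.range_cons_cons_empty, finrank_span_eq_card hli, Fintype.card_fin]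

theorem finrank_map_mulRight {t : A} (ht : t ≠ 0) (S : Submodule K A) :
    finrank K (S.map (LinearMap.mulRight K t)) = finrank K S :=
  (equivMapOfInjective _ (mul_left_injective₀ ht) S).finrank_eq.symm

theorem mul_mem_span_one_pair {q y : A} (hq2 : q * q ∈ span K ({1, q} : Set A))
    (hy : y ∈ span K ({1, q} : Set A)) : q * y ∈ span K ({1, q} : Set A) := by
  obtain ⟨a, b, rfl⟩ := mem_span_pair.mp hy
  rw [mul_add, mul_smul_comm, mul_smul_comm, mul_one]
  exact add_mem (smul_mem _ _ (subset_span (by simp))) (smul_mem _ _ hq2)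

theorem mul_mem_map_mulRight_span_one_pair {q x : A} (t : A)
    (hq2 : q * q ∈ span K ({1, q} : Set A))
    (hx : x ∈ (span K ({1, q} : Set A)).map (LinearMap.mulRight K t)) :
    q * x ∈ (span K ({1, q} : Set A)).map (LinearMap.mulRight K t) := by
  obtain ⟨y, hy, rfl⟩ := hx
  exact ⟨q * y, mul_mem_span_one_pair hq2 hy, mul_assoc q y t⟩

theorem leftMul_invariant_iff_eq_map_mulRight {q : A} (hq : q ∉ Set.range (algebraMap K A))
    (hq2 : q * q ∈ span K ({1, q} : Set A)) {X : Submodule K A} (hX : finrank K X = 2) :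
    (∀ x ∈ X, q * x ∈ X) ↔
      ∃ t : A, t ≠ 0 ∧ X = (span K ({1, q} : Set A)).map (LinearMap.mulRight K t) := by
  constructor
  · intro hinv
    obtain ⟨t, htX, ht⟩ := exists_mem_ne_zero_of_ne_bot (p := X) (by rintro rfl; simp at hX)
    have hle : (span K ({1, q} : Set A)).map (LinearMap.mulRight K t) ≤ X := by
      rw [map_span_le]
      rintro x (rfl | rfl)
      · simpa using htX
      · exact hinv t htX
    have : FiniteDimensional K X := Module.finite_of_finrank_pos (by omega)
    refine ⟨t, ht, (eq_of_le_of_finrank_le hle ?_).symm⟩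
    rw [finrank_map_mulRight ht, finrank_span_one_pair hq, hX]
  · rintro ⟨t, -, rfl⟩ x hx
    exact mul_mem_map_mulRight_span_one_pair t hq2 hx

end LeftMulInvariant

theorem Quaternion.mul_self_mem_span_one_self (q : Quaternion ℝ) :
    q * q ∈ span ℝ ({1, q} : Set (Quaternion ℝ)) := by
  have hq2 : q * q = (-normSq q) • 1 + (2 * q.re) • q := by
    ext <;> simp [normSq_def'] <;> ring
  rw [hq2]
  exact mem_span_pair.mpr ⟨_, _, rfl⟩

theorem stmt_6 (q : Quaternion ℝ)
    (hq : q ∉ Set.range (algebraMap ℝ (Quaternion ℝ)))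
    (X : Submodule ℝ (Quaternion ℝ)) (hX : Module.finrank ℝ X = 2) :
    (∀ x ∈ X, q * x ∈ X) ↔
      ∃ t : Quaternion ℝ, t ≠ 0 ∧
        X = (Submodule.span ℝ ({1, q} : Set (Quaternion ℝ))).map
              (LinearMap.mulRight ℝ t) :=
  leftMul_invariant_iff_eq_map_mulRight hq q.mul_self_mem_span_one_self hX
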